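/- Let (H, B, φ) be a Hopf bracoid over a field K such that φ is a coalgebra morphism, and define Φ'(h ⊗ b) := Σ φ(h₍₁₎ ⊗ b) · S_B(u(h₍₂₎)), where u(h) := φ(h ⊗ 1_B). Then (B, Φ') is a left H-module algebra; that is, for all h, h' ∈ H and b, b' ∈ B: Φ'(1_H ⊗ b) = b, Φ'(h ⊗ Φ'(h' ⊗ b)) = Φ'(h h' ⊗ b), Φ'(h ⊗ 1_B) = ε_H(h) 1_B, and Φ'(h ⊗ b b') = Σ Φ'(h₍₁₎ ⊗ b) · Φ'(h₍₂₎ ⊗ b'). -/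

import Mathlib

open TensorProduct LinearMap

noncomputable section

namespace HopfBracoidPaper

set_option maxHeartbeats 1000000
set_option synthInstance.maxHeartbeats 400000

variable (K : Type*) [Field K]
variable (H B : Type*) [Ring H] [Ring B] [HopfAlgebra K H] [HopfAlgebra K B]

/-- `u(h) = φ(h ⊗ 1_B)`. -/
def uMap (φ : H ⊗[K] B →ₗ[K] B) : H →ₗ[K] B :=
  φ ∘ₗ (TensorProduct.mk K H B).flip 1

/-- `Φ(h ⊗ b) = Σ S_B(u(h₍₁₎)) · φ(h₍₂₎ ⊗ b)`. -/
def PhiMap (φ : H ⊗[K] B →ₗ[K] B) : H ⊗[K] B →ₗ[K] B :=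
  LinearMap.mul' K B
    ∘ₗ TensorProduct.map (HopfAlgebra.antipode (R := K) ∘ₗ uMap K H B φ) φ
    ∘ₗ (TensorProduct.assoc K H H B).toLinearMap
    ∘ₗ LinearMap.rTensor B (Coalgebra.comul (R := K))

/-- `(B, φ)` is a left `H`-module. -/
structure IsModuleAction (φ : H ⊗[K] B →ₗ[K] B) : Prop where
  one_act : ∀ b : B, φ ((1 : H) ⊗ₜ[K] b) = b
  mul_act : ∀ (h h' : H) (b : B), φ ((h * h') ⊗ₜ[K] b) = φ (h ⊗ₜ[K] φ (h' ⊗ₜ[K] b))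

/-- `(H, B, φ)` is a Hopf bracoid: `(B, φ)` is a left `H`-module and
`φ(h ⊗ b·b') = Σ φ(h₍₁₎ ⊗ b) · Φ(h₍₂₎ ⊗ b')`. -/
structure IsHopfBracoid (φ : H ⊗[K] B →ₗ[K] B) : Prop where
  one_act : ∀ b : B, φ ((1 : H) ⊗ₜ[K] b) = b
  mul_act : ∀ (h h' : H) (b : B), φ ((h * h') ⊗ₜ[K] b) = φ (h ⊗ₜ[K] φ (h' ⊗ₜ[K] b))
  compat : ∀ (h : H) (b b' : B),
    φ (h ⊗ₜ[K] (b * b')) =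
      (LinearMap.mul' K B
        ∘ₗ TensorProduct.map φ (PhiMap K H B φ)
        ∘ₗ (TensorProduct.tensorTensorTensorComm K H H B B).toLinearMap)
        ((Coalgebra.comul (R := K) h) ⊗ₜ[K] (b ⊗ₜ[K] b'))

/-- `φ : H ⊗ B → B` is a coalgebra morphism:
`ε_B(φ(h ⊗ b)) = ε_H(h) ε_B(b)` and
`δ_B(φ(h ⊗ b)) = Σ φ(h₍₁₎ ⊗ b₍₁₎) ⊗ φ(h₍₂₎ ⊗ b₍₂₎)`. -/
structure IsCoalgebraMorphism (φ : H ⊗[K] B →ₗ[K] B) : Prop where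
  counit_comp : ∀ (h : H) (b : B),
    Coalgebra.counit (R := K) (φ (h ⊗ₜ[K] b)) =
      Coalgebra.counit (R := K) h * Coalgebra.counit (R := K) b
  comul_comp : ∀ (h : H) (b : B),
    Coalgebra.comul (R := K) (φ (h ⊗ₜ[K] b)) =
      (TensorProduct.map φ φ)
        ((TensorProduct.tensorTensorTensorComm K H H B B)
          ((Coalgebra.comul (R := K) h) ⊗ₜ[K] (Coalgebra.comul (R := K) b)))

/-- `(B, ψ)` is a left `H`-module algebra. -/
structure IsModuleAlgebra (ψ : H ⊗[K] B →ₗ[K] B) : Prop where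
  one_act : ∀ b : B, ψ ((1 : H) ⊗ₜ[K] b) = b
  mul_act : ∀ (h h' : H) (b : B), ψ ((h * h') ⊗ₜ[K] b) = ψ (h ⊗ₜ[K] ψ (h' ⊗ₜ[K] b))
  act_one : ∀ h : H, ψ (h ⊗ₜ[K] (1 : B)) = Coalgebra.counit (R := K) h • (1 : B)
  act_mul : ∀ (h : H) (b b' : B),
    ψ (h ⊗ₜ[K] (b * b')) =
      (LinearMap.mul' K B
        ∘ₗ TensorProduct.map ψ ψ
        ∘ₗ (TensorProduct.tensorTensorTensorComm K H H B B).toLinearMap)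
        ((Coalgebra.comul (R := K) h) ⊗ₜ[K] (b ⊗ₜ[K] b'))

/-- `π : H → B` is a 1-cocycle with action `γ`. -/
structure IsOneCocycle (π : H →ₗ[K] B) (γ : H ⊗[K] B →ₗ[K] B) : Prop where
  moduleAlgebra : IsModuleAlgebra K H B γ
  counit_comp : ∀ h : H, Coalgebra.counit (R := K) (π h) = Coalgebra.counit (R := K) h
  comul_comp : ∀ h : H,
    Coalgebra.comul (R := K) (π h) = (TensorProduct.map π π) (Coalgebra.comul (R := K) h)
  cocycle : ∀ h g : H,
    π (h * g) =
      (LinearMap.mul' K B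
        ∘ₗ TensorProduct.map π γ
        ∘ₗ (TensorProduct.assoc K H H B).toLinearMap)
        ((Coalgebra.comul (R := K) h) ⊗ₜ[K] π g)


/-- `Φ'(h ⊗ b) = Σ φ(h₍₁₎ ⊗ b) · S_B(u(h₍₂₎))`. -/
def PhiMap' (φ : H ⊗[K] B →ₗ[K] B) : H ⊗[K] B →ₗ[K] B :=
  LinearMap.mul' K B
    ∘ₗ TensorProduct.map φ (HopfAlgebra.antipode (R := K) ∘ₗ uMap K H B φ)
    ∘ₗ (TensorProduct.assoc K H B H).symm.toLinearMap
    ∘ₗ LinearMap.lTensor H (TensorProduct.comm K H B).toLinearMap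
    ∘ₗ (TensorProduct.assoc K H H B).toLinearMap
    ∘ₗ LinearMap.rTensor B (Coalgebra.comul (R := K))

/-- `ψ(h ⊗ b) = Σ π(h₍₁₎) · γ(h₍₂₎ ⊗ b)`. -/
def psiMap (π : H →ₗ[K] B) (γ : H ⊗[K] B →ₗ[K] B) : H ⊗[K] B →ₗ[K] B :=
  LinearMap.mul' K B
    ∘ₗ TensorProduct.map π γ
    ∘ₗ (TensorProduct.assoc K H H B).toLinearMap
    ∘ₗ LinearMap.rTensor B (Coalgebra.comul (R := K))

/-- `Σ ψ(h₍₂₎ ⊗ b) ⊗ h₍₁₎ = Σ ψ(h₍₁₎ ⊗ b) ⊗ h₍₂₎` in `B ⊗ H`. -/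
def SatisfiesStarCondition (ψ : H ⊗[K] B →ₗ[K] B) : Prop :=
  ∀ (h : H) (b : B),
    ((TensorProduct.comm K H B).toLinearMap ∘ₗ LinearMap.lTensor H ψ)
      ((TensorProduct.assoc K H H B) ((Coalgebra.comul (R := K) h) ⊗ₜ[K] b)) =
    ((TensorProduct.comm K H B).toLinearMap ∘ₗ LinearMap.lTensor H ψ)
      ((TensorProduct.assoc K H H B)
        (((TensorProduct.comm K H H) (Coalgebra.comul (R := K) h)) ⊗ₜ[K] b))

/-- A Hopf algebra is cocommutative if `c ∘ δ = δ`. -/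
def IsCocommutative : Prop :=
  ∀ h : H, (TensorProduct.comm K H H) (Coalgebra.comul (R := K) h) = Coalgebra.comul (R := K) h

/-- `x` is a group-like element: `δ(x) = x ⊗ x` and `ε(x) = 1`. -/
def IsGroupLike (x : B) : Prop :=
  Coalgebra.counit (R := K) x = 1 ∧ Coalgebra.comul (R := K) x = x ⊗ₜ[K] x

/-- `Φᵒᵖ(h ⊗ b) = Σ φ(h₍₂₎ ⊗ b) · S_B(u(h₍₁₎))`: the `Φ`-map of `φ` with respect to the
opposite multiplication of `B`. -/
def PhiOpMap (φ : H ⊗[K] B →ₗ[K] B) : H ⊗[K] B →ₗ[K] B :=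
  LinearMap.mul' K B
    ∘ₗ (TensorProduct.comm K B B).toLinearMap
    ∘ₗ TensorProduct.map (HopfAlgebra.antipode (R := K) ∘ₗ uMap K H B φ) φ
    ∘ₗ (TensorProduct.assoc K H H B).toLinearMap
    ∘ₗ LinearMap.rTensor B (Coalgebra.comul (R := K))


section ConvGeneric

open Coalgebra

set_option maxHeartbeats 1000000 in
section
end

variable {R : Type*} [CommSemiring R]
variable {A : Type*} [AddCommMonoid A] [Module R A] [Coalgebra R A]
variable {L : Type*} [Semiring L] [Algebra R L]

/-- Convolution product of linear maps from a coalgebra to an algebra. -/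
def conv (f g : A →ₗ[R] L) : A →ₗ[R] L :=
  LinearMap.mul' R L ∘ₗ TensorProduct.map f g ∘ₗ Coalgebra.comul

lemma conv_apply_repr (f g : A →ₗ[R] L) {a : A} {ι : Type*} (r : Coalgebra.Repr R a ι) :
    conv f g a = ∑ i ∈ r.index, f (r.left i) * g (r.right i) := by
  simp [conv, ← r.eq, map_sum]

lemma sum_counit_smul_right {a : A} {ι : Type*} (r : Coalgebra.Repr R a ι) :
    ∑ i ∈ r.index, (Coalgebra.counit (R := R) (r.right i)) • r.left i = a := by
  have h := congrArg (TensorProduct.rid R A) (Coalgebra.sum_tmul_counit_eq r)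
  rw [map_sum] at h
  simp only [TensorProduct.rid_tmul] at h
  simpa using h

lemma sum_counit_smul_left {a : A} {ι : Type*} (r : Coalgebra.Repr R a ι) :
    ∑ i ∈ r.index, (Coalgebra.counit (R := R) (r.left i)) • r.right i = a := by
  have h := congrArg (TensorProduct.lid R A) (Coalgebra.sum_counit_tmul_eq r)
  rw [map_sum] at h
  simp only [TensorProduct.lid_tmul] at h
  simpa using h

/-- The unit of the convolution algebra. -/
def convUnit : A →ₗ[R] L := Algebra.linearMap R L ∘ₗ Coalgebra.counit

lemma convUnit_apply (a : A) :
    (convUnit : A →ₗ[R] L) a = algebraMap R L (Coalgebra.counit (R := R) a) := rfl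

lemma conv_unit_right (f : A →ₗ[R] L) : conv f convUnit = f := by
  apply LinearMap.ext; intro a
  rw [conv_apply_repr f convUnit (ℛ R a)]
  calc ∑ i ∈ (ℛ R a).index, f ((ℛ R a).left i) * convUnit ((ℛ R a).right i)
      = ∑ i ∈ (ℛ R a).index, f ((Coalgebra.counit (R := R) ((ℛ R a).right i)) • (ℛ R a).left i) := by
        refine Finset.sum_congr rfl fun i _ => ?_
        rw [map_smul, convUnit_apply, ← Algebra.commutes, ← Algebra.smul_def]
    _ = f a := by rw [← map_sum, sum_counit_smul_right]

lemma conv_unit_left (f : A →ₗ[R] L) : conv convUnit f = f := by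
  apply LinearMap.ext; intro a
  rw [conv_apply_repr convUnit f (ℛ R a)]
  calc ∑ i ∈ (ℛ R a).index, convUnit ((ℛ R a).left i) * f ((ℛ R a).right i)
      = ∑ i ∈ (ℛ R a).index, f ((Coalgebra.counit (R := R) ((ℛ R a).left i)) • (ℛ R a).right i) := by
        refine Finset.sum_congr rfl fun i _ => ?_
        rw [map_smul, convUnit_apply, ← Algebra.smul_def]
    _ = f a := by rw [← map_sum, sum_counit_smul_left]

lemma comul_repr (a : A) :
    Coalgebra.comul (R := R) a
      = ∑ i ∈ (ℛ R a).index, (ℛ R a).left i ⊗ₜ[R] (ℛ R a).right i := ((ℛ R a).eq).symm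

/-- Regrouping a triple Sweedler sum using coassociativity. -/
lemma sum_mul_mul_regroup (f g e : A →ₗ[R] L) (a : A) {ι κ Λ : Type*} {r : Coalgebra.Repr R a ι}
    {a₁ : ∀ i : ι, Coalgebra.Repr R (r.left i) κ}
    {a₂ : ∀ i : ι, Coalgebra.Repr R (r.right i) Λ} :
    ∑ i ∈ r.index, ∑ k ∈ (a₁ i).index,
        f ((a₁ i).left k) * (g ((a₁ i).right k) * e (r.right i))
    = ∑ i ∈ r.index, ∑ k ∈ (a₂ i).index,
        f (r.left i) * (g ((a₂ i).left k) * e ((a₂ i).right k)) := by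
  have h := Coalgebra.sum_map_tmul_tmul_eq (f := f) (g := g) (h := e) a
    (repr := r) (a₁ := a₁) (a₂ := a₂)
  apply_fun (LinearMap.mul' R L ∘ₗ LinearMap.lTensor L (LinearMap.mul' R L)) at h
  simpa [map_sum] using h.symm

lemma conv_assoc (f g e : A →ₗ[R] L) : conv (conv f g) e = conv f (conv g e) := by
  apply LinearMap.ext; intro a
  set r := ℛ R a
  rw [conv_apply_repr (conv f g) e r, conv_apply_repr f (conv g e) r]
  calc ∑ i ∈ r.index, conv f g (r.left i) * e (r.right i)
      = ∑ i ∈ r.index, ∑ k ∈ (ℛ R (r.left i)).index,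
          f ((ℛ R (r.left i)).left k) * (g ((ℛ R (r.left i)).right k) * e (r.right i)) := by
        refine Finset.sum_congr rfl fun i _ => ?_
        rw [conv_apply_repr f g (ℛ R (r.left i)), Finset.sum_mul]
        exact Finset.sum_congr rfl fun k _ => mul_assoc _ _ _
    _ = ∑ i ∈ r.index, ∑ k ∈ (ℛ R (r.right i)).index,
          f (r.left i) * (g ((ℛ R (r.right i)).left k) * e ((ℛ R (r.right i)).right k)) :=
        sum_mul_mul_regroup f g e a
    _ = ∑ i ∈ r.index, f (r.left i) * conv g e (r.right i) := by
        refine Finset.sum_congr rfl fun i _ => ?_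
        rw [conv_apply_repr g e (ℛ R (r.right i)), Finset.mul_sum]

end ConvGeneric

section MainAux

set_option maxHeartbeats 1000000
set_option synthInstance.maxHeartbeats 400000

open HopfAlgebra Coalgebra

variable (φ : H ⊗[K] B →ₗ[K] B)

lemma uMap_apply (h : H) : uMap K H B φ h = φ (h ⊗ₜ[K] (1 : B)) := rfl

/-- A representation of `1` in a bialgebra. -/
def oneRepr (L : Type*) [Ring L] [HopfAlgebra K L] : Coalgebra.Repr K (1 : L) ℕ where
  index := ({0} : Finset ℕ)
  left := fun _ => 1
  right := fun _ => 1
  eq := by simp [Algebra.TensorProduct.one_def]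

lemma antipode_one (L : Type*) [Ring L] [HopfAlgebra K L] :
    HopfAlgebra.antipode (R := K) (1 : L) = 1 := by
  have h := HopfAlgebra.sum_mul_antipode_eq_algebraMap_counit (R := K) (oneRepr K L)
  simpa [oneRepr] using h

variable {K H B}

lemma counit_uMap (hco : IsCoalgebraMorphism K H B φ) (h : H) :
    Coalgebra.counit (R := K) (uMap K H B φ h) = Coalgebra.counit (R := K) h := by
  rw [uMap_apply, hco.counit_comp, Bialgebra.counit_one, mul_one]

/-- Comultiplication of `u h` via a representation of `h`. -/
def uRepr (hco : IsCoalgebraMorphism K H B φ) {h : H} {ι : Type*} (r : Coalgebra.Repr K h ι) :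
    Coalgebra.Repr K (uMap K H B φ h) ι where
  index := r.index
  left := fun i => uMap K H B φ (r.left i)
  right := fun i => uMap K H B φ (r.right i)
  eq := by
    rw [show CoalgebraStruct.comul (R := K) (uMap K H B φ h)
        = Coalgebra.comul (R := K) (φ (h ⊗ₜ[K] (1 : B))) from rfl, hco.comul_comp,
      Bialgebra.comul_one, ← r.eq, Algebra.TensorProduct.one_def]
    simp only [uMap_apply, sum_tmul, map_sum, TensorProduct.tensorTensorTensorComm_tmul,
      TensorProduct.map_tmul]

lemma sum_u_mul_antipode (hco : IsCoalgebraMorphism K H B φ) {h : H} {ι : Type*}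
    (r : Coalgebra.Repr K h ι) :
    ∑ i ∈ r.index, uMap K H B φ (r.left i)
        * HopfAlgebra.antipode (R := K) (uMap K H B φ (r.right i))
      = algebraMap K B (Coalgebra.counit (R := K) h) := by
  simpa [uRepr, counit_uMap φ hco] using HopfAlgebra.sum_mul_antipode_eq_algebraMap_counit (R := K) (uRepr φ hco r)

/-- Comultiplication of `φ (h ⊗ b)` via representations of `h` and `b`. -/
def phiRepr (hco : IsCoalgebraMorphism K H B φ) {h : H} {b : B}
    {ι κ : Type*} (rh : Coalgebra.Repr K h ι) (rb : Coalgebra.Repr K b κ) :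
    Coalgebra.Repr K (φ (h ⊗ₜ[K] b)) (ι × κ) where
  index := rh.index ×ˢ rb.index
  left := fun p => φ (rh.left p.1 ⊗ₜ[K] rb.left p.2)
  right := fun p => φ (rh.right p.1 ⊗ₜ[K] rb.right p.2)
  eq := by
    rw [show CoalgebraStruct.comul (R := K) (φ (h ⊗ₜ[K] b))
        = Coalgebra.comul (R := K) (φ (h ⊗ₜ[K] b)) from rfl, hco.comul_comp,
      ← rh.eq, ← rb.eq, Finset.sum_product]
    simp only [sum_tmul, tmul_sum, map_sum, TensorProduct.tensorTensorTensorComm_tmul,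
      TensorProduct.map_tmul]
    rw [Finset.sum_comm]

/-- Comultiplication of `h * g` via representations of `h` and `g`. -/
def mulRepr {h g : H} {ι κ : Type*} (rh : Coalgebra.Repr K h ι) (rg : Coalgebra.Repr K g κ) :
    Coalgebra.Repr K (h * g) (ι × κ) where
  index := rh.index ×ˢ rg.index
  left := fun p => rh.left p.1 * rg.left p.2
  right := fun p => rh.right p.1 * rg.right p.2
  eq := by
    rw [show CoalgebraStruct.comul (R := K) (h * g)
        = Coalgebra.comul (R := K) (h * g) from rfl, Bialgebra.comul_mul,
      ← rh.eq, ← rg.eq, Finset.sum_mul_sum, Finset.sum_product]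
    simp only [Algebra.TensorProduct.tmul_mul_tmul]

variable (K H B)

/-- Generic version of the `Φ'` construction, with `φ` in the first slot replaced by `f`. -/
def hatConv (f : H ⊗[K] B →ₗ[K] B) : H ⊗[K] B →ₗ[K] B :=
  LinearMap.mul' K B
    ∘ₗ TensorProduct.map f (HopfAlgebra.antipode (R := K) ∘ₗ uMap K H B φ)
    ∘ₗ (TensorProduct.assoc K H B H).symm.toLinearMap
    ∘ₗ LinearMap.lTensor H (TensorProduct.comm K H B).toLinearMap
    ∘ₗ (TensorProduct.assoc K H H B).toLinearMap
    ∘ₗ LinearMap.rTensor B (Coalgebra.comul (R := K))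

lemma PhiMap'_eq_hatConv : PhiMap' K H B φ = hatConv K H B φ φ := rfl

variable {K H B}

lemma hatConv_tmul (f : H ⊗[K] B →ₗ[K] B) (x : H) (y : B) {ι : Type*} (r : Coalgebra.Repr K x ι) :
    hatConv K H B φ f (x ⊗ₜ[K] y)
      = ∑ i ∈ r.index, f (r.left i ⊗ₜ[K] y)
          * HopfAlgebra.antipode (R := K) (uMap K H B φ (r.right i)) := by
  simp [hatConv, ← r.eq, sum_tmul, map_sum]

lemma PhiMap_tmul (x : H) (y : B) {ι : Type*} (r : Coalgebra.Repr K x ι) :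
    PhiMap K H B φ (x ⊗ₜ[K] y)
      = ∑ i ∈ r.index, HopfAlgebra.antipode (R := K) (uMap K H B φ (r.left i))
          * φ (r.right i ⊗ₜ[K] y) := by
  simp [PhiMap, ← r.eq, sum_tmul, map_sum]

variable (K H B)

/-- Convolution product on linear maps `H ⊗ B → B`, with respect to the tensor-product
comultiplication on `H ⊗ B`. -/
def cconv (F G : H ⊗[K] B →ₗ[K] B) : H ⊗[K] B →ₗ[K] B :=
  LinearMap.mul' K B
    ∘ₗ TensorProduct.map F G
    ∘ₗ (TensorProduct.tensorTensorTensorComm K H H B B).toLinearMap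
    ∘ₗ TensorProduct.map (Coalgebra.comul (R := K)) (Coalgebra.comul (R := K))

/-- Unit for `cconv`. -/
def cunit : H ⊗[K] B →ₗ[K] B :=
  Algebra.linearMap K B ∘ₗ LinearMap.mul' K K
    ∘ₗ TensorProduct.map (Coalgebra.counit (R := K)) (Coalgebra.counit (R := K))

variable {K H B}

lemma cunit_tmul (h : H) (b : B) :
    cunit K H B (h ⊗ₜ[K] b)
      = algebraMap K B (Coalgebra.counit (R := K) h * Coalgebra.counit (R := K) b) := rfl

lemma cconv_tmul (F G : H ⊗[K] B →ₗ[K] B) (h : H) (b : B)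
    {ι κ : Type*} (rh : Coalgebra.Repr K h ι) (rb : Coalgebra.Repr K b κ) :
    cconv K H B F G (h ⊗ₜ[K] b)
      = ∑ i ∈ rh.index, ∑ j ∈ rb.index,
          F (rh.left i ⊗ₜ[K] rb.left j) * G (rh.right i ⊗ₜ[K] rb.right j) := by
  simp [cconv, ← rh.eq, ← rb.eq, sum_tmul, tmul_sum, map_sum]
  rw [Finset.sum_comm]

lemma sum_sum_tmul (F : H ⊗[K] B →ₗ[K] B) {ι κ : Type*} (s : Finset ι) (t : Finset κ)
    (c : ι → H) (d : κ → B) :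
    ∑ i ∈ s, ∑ j ∈ t, F (c i ⊗ₜ[K] d j)
      = F ((∑ i ∈ s, c i) ⊗ₜ[K] (∑ j ∈ t, d j)) := by
  rw [sum_tmul, map_sum]
  exact Finset.sum_congr rfl fun i _ => by rw [tmul_sum, map_sum]

lemma cconv_unit_right (F : H ⊗[K] B →ₗ[K] B) : cconv K H B F (cunit K H B) = F := by
  apply TensorProduct.ext'
  intro h b
  rw [cconv_tmul F (cunit K H B) h b (ℛ K h) (ℛ K b)]
  have key : ∀ i j, F ((ℛ K h).left i ⊗ₜ[K] (ℛ K b).left j)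
        * cunit K H B ((ℛ K h).right i ⊗ₜ[K] (ℛ K b).right j)
      = F ((Coalgebra.counit (R := K) ((ℛ K h).right i) • (ℛ K h).left i)
          ⊗ₜ[K] (Coalgebra.counit (R := K) ((ℛ K b).right j) • (ℛ K b).left j)) := by
    intro i j
    rw [cunit_tmul, ← Algebra.commutes, ← Algebra.smul_def, ← smul_tmul', map_smul, tmul_smul,
      map_smul, mul_smul]
  simp_rw [key]
  rw [sum_sum_tmul, sum_counit_smul_right, sum_counit_smul_right]

lemma cconv_unit_left (F : H ⊗[K] B →ₗ[K] B) : cconv K H B (cunit K H B) F = F := by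
  apply TensorProduct.ext'
  intro h b
  rw [cconv_tmul (cunit K H B) F h b (ℛ K h) (ℛ K b)]
  have key : ∀ i j, cunit K H B ((ℛ K h).left i ⊗ₜ[K] (ℛ K b).left j)
        * F ((ℛ K h).right i ⊗ₜ[K] (ℛ K b).right j)
      = F ((Coalgebra.counit (R := K) ((ℛ K h).left i) • (ℛ K h).right i)
          ⊗ₜ[K] (Coalgebra.counit (R := K) ((ℛ K b).left j) • (ℛ K b).right j)) := by
    intro i j
    rw [cunit_tmul, ← Algebra.smul_def, ← smul_tmul', map_smul, tmul_smul, map_smul, mul_smul]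
  simp_rw [key]
  rw [sum_sum_tmul, sum_counit_smul_left, sum_counit_smul_left]

variable (K H B)

/-- Auxiliary trilinear evaluation map used in the proof of `cconv_assoc`. -/
def assocAux (F G E : H ⊗[K] B →ₗ[K] B) :
    (H ⊗[K] (H ⊗[K] H)) ⊗[K] (B ⊗[K] (B ⊗[K] B)) →ₗ[K] B :=
  LinearMap.mul' K B
    ∘ₗ TensorProduct.map F
        (LinearMap.mul' K B ∘ₗ TensorProduct.map G E
          ∘ₗ (TensorProduct.tensorTensorTensorComm K H H B B).toLinearMap)
    ∘ₗ (TensorProduct.tensorTensorTensorComm K H (H ⊗[K] H) B (B ⊗[K] B)).toLinearMap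

variable {K H B}

lemma assocAux_tmul (F G E : H ⊗[K] B →ₗ[K] B) (x y z : H) (p q r : B) :
    assocAux K H B F G E ((x ⊗ₜ[K] (y ⊗ₜ[K] z)) ⊗ₜ[K] (p ⊗ₜ[K] (q ⊗ₜ[K] r)))
      = F (x ⊗ₜ[K] p) * (G (y ⊗ₜ[K] q) * E (z ⊗ₜ[K] r)) := by
  simp [assocAux]

lemma cconv_tmul' (F G : H ⊗[K] B →ₗ[K] B) (h : H) (b : B) :
    cconv K H B F G (h ⊗ₜ[K] b)
      = ∑ i ∈ (ℛ K h).index, ∑ j ∈ (ℛ K b).index,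
          F ((ℛ K h).left i ⊗ₜ[K] (ℛ K b).left j)
            * G ((ℛ K h).right i ⊗ₜ[K] (ℛ K b).right j) :=
  cconv_tmul F G h b (ℛ K h) (ℛ K b)

lemma cconv_assoc (F G E : H ⊗[K] B →ₗ[K] B) :
    cconv K H B (cconv K H B F G) E = cconv K H B F (cconv K H B G E) := by
  apply TensorProduct.ext'
  intro h b
  have eH1 : (TensorProduct.assoc K H H H)
      ((Coalgebra.comul (R := K)).rTensor H (Coalgebra.comul (R := K) h))
      = ∑ i ∈ (ℛ K h).index, ∑ k ∈ (ℛ K ((ℛ K h).left i)).index,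
          (ℛ K ((ℛ K h).left i)).left k
            ⊗ₜ[K] ((ℛ K ((ℛ K h).left i)).right k ⊗ₜ[K] (ℛ K h).right i) := by
    rw [comul_repr (R := K) h, map_sum]
    simp only [rTensor_tmul]
    rw [map_sum]
    refine Finset.sum_congr rfl fun i _ => ?_
    rw [comul_repr (R := K) ((ℛ K h).left i), sum_tmul, map_sum]
    simp only [assoc_tmul]
  have eB1 : (TensorProduct.assoc K B B B)
      ((Coalgebra.comul (R := K)).rTensor B (Coalgebra.comul (R := K) b))
      = ∑ j ∈ (ℛ K b).index, ∑ m ∈ (ℛ K ((ℛ K b).left j)).index,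
          (ℛ K ((ℛ K b).left j)).left m
            ⊗ₜ[K] ((ℛ K ((ℛ K b).left j)).right m ⊗ₜ[K] (ℛ K b).right j) := by
    rw [comul_repr (R := K) b, map_sum]
    simp only [rTensor_tmul]
    rw [map_sum]
    refine Finset.sum_congr rfl fun j _ => ?_
    rw [comul_repr (R := K) ((ℛ K b).left j), sum_tmul, map_sum]
    simp only [assoc_tmul]
  have eH2 : (Coalgebra.comul (R := K)).lTensor H (Coalgebra.comul (R := K) h)
      = ∑ i ∈ (ℛ K h).index, ∑ k ∈ (ℛ K ((ℛ K h).right i)).index,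
          (ℛ K h).left i
            ⊗ₜ[K] ((ℛ K ((ℛ K h).right i)).left k ⊗ₜ[K] (ℛ K ((ℛ K h).right i)).right k) := by
    rw [comul_repr (R := K) h, map_sum]
    simp only [lTensor_tmul]
    refine Finset.sum_congr rfl fun i _ => ?_
    rw [comul_repr (R := K) ((ℛ K h).right i), tmul_sum]
  have eB2 : (Coalgebra.comul (R := K)).lTensor B (Coalgebra.comul (R := K) b)
      = ∑ j ∈ (ℛ K b).index, ∑ m ∈ (ℛ K ((ℛ K b).right j)).index,
          (ℛ K b).left j
            ⊗ₜ[K] ((ℛ K ((ℛ K b).right j)).left m ⊗ₜ[K] (ℛ K ((ℛ K b).right j)).right m) := by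
    rw [comul_repr (R := K) b, map_sum]
    simp only [lTensor_tmul]
    refine Finset.sum_congr rfl fun j _ => ?_
    rw [comul_repr (R := K) ((ℛ K b).right j), tmul_sum]
  have key : assocAux K H B F G E
        ((∑ i ∈ (ℛ K h).index, ∑ k ∈ (ℛ K ((ℛ K h).left i)).index,
          (ℛ K ((ℛ K h).left i)).left k
            ⊗ₜ[K] ((ℛ K ((ℛ K h).left i)).right k ⊗ₜ[K] (ℛ K h).right i))
          ⊗ₜ[K] (∑ j ∈ (ℛ K b).index, ∑ m ∈ (ℛ K ((ℛ K b).left j)).index,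
          (ℛ K ((ℛ K b).left j)).left m
            ⊗ₜ[K] ((ℛ K ((ℛ K b).left j)).right m ⊗ₜ[K] (ℛ K b).right j)))
      = assocAux K H B F G E
        ((∑ i ∈ (ℛ K h).index, ∑ k ∈ (ℛ K ((ℛ K h).right i)).index,
          (ℛ K h).left i
            ⊗ₜ[K] ((ℛ K ((ℛ K h).right i)).left k ⊗ₜ[K] (ℛ K ((ℛ K h).right i)).right k))
          ⊗ₜ[K] (∑ j ∈ (ℛ K b).index, ∑ m ∈ (ℛ K ((ℛ K b).right j)).index,
          (ℛ K b).left j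
            ⊗ₜ[K] ((ℛ K ((ℛ K b).right j)).left m ⊗ₜ[K] (ℛ K ((ℛ K b).right j)).right m))) := by
    rw [← eH1, ← eB1, ← eH2, ← eB2, Coalgebra.coassoc_apply, Coalgebra.coassoc_apply]
  simp only [sum_tmul, tmul_sum, map_sum, assocAux_tmul] at key
  rw [cconv_tmul' (cconv K H B F G) E h b, cconv_tmul' F (cconv K H B G E) h b]
  simp_rw [cconv_tmul', Finset.sum_mul, Finset.mul_sum, mul_assoc]
  refine Eq.trans (Finset.sum_comm.trans (Finset.sum_congr rfl fun j _ =>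
    (Finset.sum_congr rfl fun i _ => Finset.sum_comm).trans Finset.sum_comm)) (key.trans ?_)
  exact (Finset.sum_comm.trans (Finset.sum_congr rfl fun j _ =>
    (Finset.sum_congr rfl fun i _ => Finset.sum_comm).trans Finset.sum_comm)).symm


lemma compat_repr (hbr : IsHopfBracoid K H B φ) (h : H) (b b' : B) {ι : Type*} (r : Coalgebra.Repr K h ι) :
    φ (h ⊗ₜ[K] (b * b'))
      = ∑ i ∈ r.index, φ (r.left i ⊗ₜ[K] b) * PhiMap K H B φ (r.right i ⊗ₜ[K] b') := by
  rw [hbr.compat, ← r.eq]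
  simp only [LinearMap.comp_apply, LinearEquiv.coe_coe, sum_tmul, map_sum,
    TensorProduct.tensorTensorTensorComm_tmul, TensorProduct.map_tmul, LinearMap.mul'_apply]

variable (K H B)

/-- `h ↦ φ (h ⊗ X)`. -/
def phiR (X : B) : H →ₗ[K] B := φ ∘ₗ (TensorProduct.mk K H B).flip X

/-- `S_B ∘ u`. -/
def su : H →ₗ[K] B := HopfAlgebra.antipode (R := K) ∘ₗ uMap K H B φ

/-- The convolution inverse of `φ`, written with `Φ` and `u`. -/
def Gmap : H ⊗[K] B →ₗ[K] B :=
  hatConv K H B φ (PhiMap K H B φ ∘ₗ LinearMap.lTensor H (HopfAlgebra.antipode (R := K)))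

variable {K H B}

lemma phiR_apply (X : B) (x : H) : phiR K H B φ X x = φ (x ⊗ₜ[K] X) := rfl

lemma su_apply (x : H) :
    su K H B φ x = HopfAlgebra.antipode (R := K) (uMap K H B φ x) := rfl

lemma hatConv_tmul_conv (f : H ⊗[K] B →ₗ[K] B) (x : H) (y : B) :
    hatConv K H B φ f (x ⊗ₜ[K] y)
      = conv (f ∘ₗ (TensorProduct.mk K H B).flip y) (su K H B φ) x := by
  rw [hatConv_tmul φ f x y (ℛ K x), conv_apply_repr _ _ (ℛ K x)]
  rfl

lemma PhiMap'_tmul_conv (x : H) (y : B) :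
    PhiMap' K H B φ (x ⊗ₜ[K] y) = conv (phiR K H B φ y) (su K H B φ) x := by
  rw [PhiMap'_eq_hatConv, hatConv_tmul_conv]
  rfl

lemma PhiMap_conv (y : B) :
    PhiMap K H B φ ∘ₗ (TensorProduct.mk K H B).flip y
      = conv (su K H B φ) (phiR K H B φ y) := by
  apply LinearMap.ext; intro x
  rw [LinearMap.comp_apply, show ((TensorProduct.mk K H B).flip y) x = x ⊗ₜ[K] y from rfl,
    PhiMap_tmul φ x y (ℛ K x), conv_apply_repr _ _ (ℛ K x)]
  rfl

lemma compat_conv (hbr : IsHopfBracoid K H B φ) (X Y : B) :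
    phiR K H B φ (X * Y)
      = conv (phiR K H B φ X) (conv (su K H B φ) (phiR K H B φ Y)) := by
  apply LinearMap.ext; intro x
  rw [phiR_apply, compat_repr φ hbr x X Y (ℛ K x), conv_apply_repr _ _ (ℛ K x)]
  refine Finset.sum_congr rfl fun i _ => ?_
  rw [← PhiMap_conv]
  rfl

lemma Gmap_tmul_conv (x : H) (y : B) :
    Gmap K H B φ (x ⊗ₜ[K] y)
      = conv (conv (su K H B φ) (phiR K H B φ (HopfAlgebra.antipode (R := K) y)))
          (su K H B φ) x := by
  rw [Gmap, hatConv_tmul_conv]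
  have e : (PhiMap K H B φ ∘ₗ LinearMap.lTensor H (HopfAlgebra.antipode (R := K)))
        ∘ₗ (TensorProduct.mk K H B).flip y
      = PhiMap K H B φ ∘ₗ (TensorProduct.mk K H B).flip (HopfAlgebra.antipode (R := K) y) := by
    apply LinearMap.ext; intro x'
    show PhiMap K H B φ ((LinearMap.lTensor H (HopfAlgebra.antipode (R := K))) (x' ⊗ₜ[K] y))
      = PhiMap K H B φ (x' ⊗ₜ[K] HopfAlgebra.antipode (R := K) y)
    rw [LinearMap.lTensor_tmul]
  rw [e, PhiMap_conv]

lemma PhiMap'_tmul (x : H) (y : B) {ι : Type*} (r : Coalgebra.Repr K x ι) :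
    PhiMap' K H B φ (x ⊗ₜ[K] y)
      = ∑ i ∈ r.index, φ (r.left i ⊗ₜ[K] y)
          * HopfAlgebra.antipode (R := K) (uMap K H B φ (r.right i)) := by
  rw [PhiMap'_eq_hatConv]
  exact hatConv_tmul φ φ x y r

lemma cconv_phi_antipode (hco : IsCoalgebraMorphism K H B φ) :
    cconv K H B φ (HopfAlgebra.antipode (R := K) ∘ₗ φ) = cunit K H B := by
  apply TensorProduct.ext'
  intro h b
  rw [cconv_tmul φ _ h b (ℛ K h) (ℛ K b), cunit_tmul]
  have key := HopfAlgebra.sum_mul_antipode_eq_algebraMap_counit (R := K) (phiRepr φ hco (ℛ K h) (ℛ K b))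
  simp only [phiRepr] at key
  rw [Finset.sum_product] at key
  simpa [hco.counit_comp] using key

lemma cconv_antipode_phi (hco : IsCoalgebraMorphism K H B φ) :
    cconv K H B (HopfAlgebra.antipode (R := K) ∘ₗ φ) φ = cunit K H B := by
  apply TensorProduct.ext'
  intro h b
  rw [cconv_tmul _ φ h b (ℛ K h) (ℛ K b), cunit_tmul]
  have key := HopfAlgebra.sum_antipode_mul_eq_algebraMap_counit (R := K) (phiRepr φ hco (ℛ K h) (ℛ K b))
  simp only [phiRepr] at key
  rw [Finset.sum_product] at key
  simpa [hco.counit_comp] using key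

lemma conv_phiR_sum {ι : Type*} (t : Finset ι) (x : ι → B) (h : H) :
    ∑ j ∈ t, conv (phiR K H B φ (x j)) (su K H B φ) h
      = conv (phiR K H B φ (∑ j ∈ t, x j)) (su K H B φ) h := by
  simp_rw [conv_apply_repr _ _ (ℛ K h)]
  rw [Finset.sum_comm]
  refine Finset.sum_congr rfl fun i _ => ?_
  rw [← Finset.sum_mul]
  congr 1
  simp only [phiR_apply, ← map_sum, ← tmul_sum]

lemma conv_phiR_algebraMap (hco : IsCoalgebraMorphism K H B φ) (s : K) (h : H) :
    conv (phiR K H B φ (algebraMap K B s)) (su K H B φ) h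
      = algebraMap K B (Coalgebra.counit (R := K) h * s) := by
  rw [conv_apply_repr _ _ (ℛ K h)]
  have e1 : ∀ i, phiR K H B φ (algebraMap K B s) ((ℛ K h).left i)
      = s • uMap K H B φ ((ℛ K h).left i) := by
    intro i
    rw [phiR_apply, Algebra.algebraMap_eq_smul_one, tmul_smul, map_smul, uMap_apply]
  simp_rw [e1, su_apply, smul_mul_assoc, ← Finset.smul_sum,
    sum_u_mul_antipode φ hco (ℛ K h)]
  rw [Algebra.smul_def, ← map_mul, mul_comm]

lemma cconv_phi_Gmap (hbr : IsHopfBracoid K H B φ) (hco : IsCoalgebraMorphism K H B φ) :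
    cconv K H B φ (Gmap K H B φ) = cunit K H B := by
  apply TensorProduct.ext'
  intro h b
  rw [cconv_tmul φ (Gmap K H B φ) h b (ℛ K h) (ℛ K b), cunit_tmul, Finset.sum_comm]
  calc
    ∑ j ∈ (ℛ K b).index, ∑ i ∈ (ℛ K h).index,
        φ ((ℛ K h).left i ⊗ₜ[K] (ℛ K b).left j)
          * Gmap K H B φ ((ℛ K h).right i ⊗ₜ[K] (ℛ K b).right j)
      = ∑ j ∈ (ℛ K b).index,
          conv (phiR K H B φ ((ℛ K b).left j
              * HopfAlgebra.antipode (R := K) ((ℛ K b).right j))) (su K H B φ) h := by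
        refine Finset.sum_congr rfl fun j _ => ?_
        rw [compat_conv φ hbr, conv_assoc, conv_apply_repr _ _ (ℛ K h)]
        refine Finset.sum_congr rfl fun i _ => ?_
        rw [Gmap_tmul_conv, conv_assoc]
        rfl
    _ = conv (phiR K H B φ (algebraMap K B (Coalgebra.counit (R := K) b)))
          (su K H B φ) h := by
        rw [conv_phiR_sum, HopfAlgebra.sum_mul_antipode_eq_algebraMap_counit (R := K) (ℛ K b)]
    _ = algebraMap K B (Coalgebra.counit (R := K) h * Coalgebra.counit (R := K) b) :=
        conv_phiR_algebraMap φ hco _ h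

lemma antipode_phi_eq_Gmap (hbr : IsHopfBracoid K H B φ)
    (hco : IsCoalgebraMorphism K H B φ) :
    HopfAlgebra.antipode (R := K) ∘ₗ φ = Gmap K H B φ := by
  calc
    HopfAlgebra.antipode (R := K) ∘ₗ φ
        = cconv K H B (HopfAlgebra.antipode (R := K) ∘ₗ φ) (cunit K H B) :=
          (cconv_unit_right _).symm
    _ = cconv K H B (HopfAlgebra.antipode (R := K) ∘ₗ φ)
          (cconv K H B φ (Gmap K H B φ)) := by rw [cconv_phi_Gmap φ hbr hco]
    _ = cconv K H B (cconv K H B (HopfAlgebra.antipode (R := K) ∘ₗ φ) φ)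
          (Gmap K H B φ) := (cconv_assoc _ _ _).symm
    _ = cconv K H B (cunit K H B) (Gmap K H B φ) := by rw [cconv_antipode_phi φ hco]
    _ = Gmap K H B φ := cconv_unit_left _

end MainAux

open HopfAlgebra Coalgebra

/-- If `(H, B, φ)` is a Hopf bracoid such that `φ` is a coalgebra morphism, then
`(B, Φ')` is a left `H`-module algebra. -/
theorem statement6 (φ : H ⊗[K] B →ₗ[K] B)
    (hbr : IsHopfBracoid K H B φ) (hco : IsCoalgebraMorphism K H B φ) :
    IsModuleAlgebra K H B (PhiMap' K H B φ) := by
  refine ⟨?_, ?_, ?_, ?_⟩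
  · -- one_act
    intro b
    rw [PhiMap'_tmul φ 1 b (oneRepr K H)]
    simp only [oneRepr]
    rw [Finset.sum_singleton, hbr.one_act b, uMap_apply, hbr.one_act (1 : B),
      antipode_one K B, mul_one]
  · -- mul_act
    intro h g b
    rw [PhiMap'_tmul φ (h * g) b (mulRepr (ℛ K h) (ℛ K g))]
    simp only [mulRepr]
    rw [Finset.sum_product]
    have e1 : ∀ (i : H × H) (j : H × H),
        φ (((ℛ K h).left i * (ℛ K g).left j) ⊗ₜ[K] b)
          = phiR K H B φ (φ ((ℛ K g).left j ⊗ₜ[K] b)) ((ℛ K h).left i) :=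
      fun i j => hbr.mul_act _ _ _
    have e2 : ∀ (i : H × H) (j : H × H),
        HopfAlgebra.antipode (R := K)
            (uMap K H B φ ((ℛ K h).right i * (ℛ K g).right j))
          = conv (conv (su K H B φ)
              (phiR K H B φ
                (HopfAlgebra.antipode (R := K) (uMap K H B φ ((ℛ K g).right j)))))
              (su K H B φ) ((ℛ K h).right i) := by
      intro i j
      rw [uMap_apply, hbr.mul_act]
      have e3 : φ ((ℛ K h).right i ⊗ₜ[K] φ ((ℛ K g).right j ⊗ₜ[K] (1 : B)))
          = φ ((ℛ K h).right i ⊗ₜ[K] uMap K H B φ ((ℛ K g).right j)) := rfl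
      rw [e3]
      have e4 := LinearMap.congr_fun (antipode_phi_eq_Gmap φ hbr hco)
        ((ℛ K h).right i ⊗ₜ[K] uMap K H B φ ((ℛ K g).right j))
      rw [LinearMap.comp_apply] at e4
      rw [e4, Gmap_tmul_conv]
    simp_rw [e1, e2]
    rw [Finset.sum_comm]
    calc
      ∑ j ∈ (ℛ K g).index, ∑ i ∈ (ℛ K h).index,
          phiR K H B φ (φ ((ℛ K g).left j ⊗ₜ[K] b)) ((ℛ K h).left i)
            * conv (conv (su K H B φ)
                (phiR K H B φ
                  (HopfAlgebra.antipode (R := K) (uMap K H B φ ((ℛ K g).right j)))))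
                (su K H B φ) ((ℛ K h).right i)
        = ∑ j ∈ (ℛ K g).index,
            conv (phiR K H B φ (φ ((ℛ K g).left j ⊗ₜ[K] b)
                * HopfAlgebra.antipode (R := K) (uMap K H B φ ((ℛ K g).right j))))
              (su K H B φ) h := by
          refine Finset.sum_congr rfl fun j _ => ?_
          rw [show conv (phiR K H B φ (φ ((ℛ K g).left j ⊗ₜ[K] b)
                * HopfAlgebra.antipode (R := K) (uMap K H B φ ((ℛ K g).right j))))
                (su K H B φ)
              = conv (phiR K H B φ (φ ((ℛ K g).left j ⊗ₜ[K] b)))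
                  (conv (conv (su K H B φ)
                    (phiR K H B φ
                      (HopfAlgebra.antipode (R := K) (uMap K H B φ ((ℛ K g).right j)))))
                    (su K H B φ)) from by
            rw [compat_conv φ hbr, conv_assoc]]
          rw [conv_apply_repr _ _ (ℛ K h)]
      _ = ∑ j ∈ (ℛ K g).index, PhiMap' K H B φ (h ⊗ₜ[K] (φ ((ℛ K g).left j ⊗ₜ[K] b)
            * HopfAlgebra.antipode (R := K) (uMap K H B φ ((ℛ K g).right j)))) := by
          exact Finset.sum_congr rfl fun j _ => (PhiMap'_tmul_conv φ _ _).symm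
      _ = PhiMap' K H B φ (h ⊗ₜ[K] ∑ j ∈ (ℛ K g).index, φ ((ℛ K g).left j ⊗ₜ[K] b)
            * HopfAlgebra.antipode (R := K) (uMap K H B φ ((ℛ K g).right j))) := by
          rw [← map_sum, ← tmul_sum]
      _ = PhiMap' K H B φ (h ⊗ₜ[K] PhiMap' K H B φ (g ⊗ₜ[K] b)) := by
          rw [← PhiMap'_tmul φ g b (ℛ K g)]
  · -- act_one
    intro h
    rw [PhiMap'_tmul φ h 1 (ℛ K h)]
    simp_rw [← uMap_apply]
    rw [sum_u_mul_antipode φ hco (ℛ K h), Algebra.algebraMap_eq_smul_one]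
  · -- act_mul
    intro h b b'
    rw [comul_repr (R := K) h]
    simp only [LinearMap.comp_apply, LinearEquiv.coe_coe, sum_tmul, map_sum,
      TensorProduct.tensorTensorTensorComm_tmul, TensorProduct.map_tmul,
      LinearMap.mul'_apply]
    simp_rw [PhiMap'_tmul_conv]
    rw [compat_conv φ hbr, conv_assoc, conv_assoc, ← conv_assoc,
      conv_apply_repr _ _ (ℛ K h)]

end HopfBracoidPaper
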